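/- arXiv:2211.04010 — 10 statements merged into one kernel-verified Lean document; each statement's English description precedes it below -/
import Mathlib

section
/- For every real number u with 0 < u and every real number x with 0 < x < 1/u, one has sqrt(1 + γ_x) = 1 + γ_{ᾱx}, where ᾱ = ᾱ(x) = (1 - sqrt(1 - xu))/(xu). (Here γ_y := yu/(1 - yu) for real y with 0 ≤ y < 1/u.) -/
/-!
In the variable `t = y u`, `γ` is `t ↦ t / (1 - t)` and `1 + t / (1 - t) = (1 - t)⁻¹`. Hence
`√(1 + γ_x) = (√(1 - x u))⁻¹ = 1 + γ_y` for the `y` with `y u = 1 - √(1 - x u)`, which is `ᾱ x`.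
-/

theorem one_add_div_one_sub {K : Type*} [Field K] {t : K} (ht : t ≠ 1) :
    1 + t / (1 - t) = (1 - t)⁻¹ := by
  rw [one_add_div (sub_ne_zero.mpr ht.symm), sub_add_cancel, one_div]

theorem sqrt_one_add_div_one_sub {t : ℝ} (ht : t < 1) :
    √(1 + t / (1 - t)) = 1 + (1 - √(1 - t)) / (1 - (1 - √(1 - t))) := by
  have hs : 1 - √(1 - t) ≠ 1 := by
    rw [Ne, sub_eq_self, Real.sqrt_eq_zero']
    linarith
  rw [one_add_div_one_sub ht.ne, Real.sqrt_inv, one_add_div_one_sub hs, sub_sub_cancel]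

theorem sqrt_one_add_gamma_general (u x : ℝ) (hu : 0 < u) (hx' : x < 1 / u) :
    Real.sqrt (1 + x * u / (1 - x * u)) =
      1 + ((1 - Real.sqrt (1 - x * u)) / (x * u) * x) * u /
        (1 - ((1 - Real.sqrt (1 - x * u)) / (x * u) * x) * u) := by
  have hxu : x * u < 1 := (lt_div_iff₀ hu).mp hx'
  have hα : (1 - √(1 - x * u)) / (x * u) * x * u = 1 - √(1 - x * u) := by
    rw [mul_assoc]
    -- at `x * u = 0` the quotient is the junk value `0`, but so is `1 - √1`
    exact div_mul_cancel_of_imp fun h => by simp [h]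
  rw [hα, sqrt_one_add_div_one_sub hxu]

/-- Fix a unit roundoff `u > 0` and define `γ y := y*u/(1 - y*u)`.
For `0 < x < 1/u`, `sqrt (1 + γ x) = 1 + γ (ᾱ * x)` with
`ᾱ = (1 - sqrt (1 - x*u)) / (x*u)`. -/
theorem sqrt_one_add_gamma (u x : ℝ) (hu : 0 < u) (hx : 0 < x) (hx' : x < 1 / u) :
    Real.sqrt (1 + x * u / (1 - x * u)) =
      1 + ((1 - Real.sqrt (1 - x * u)) / (x * u) * x) * u /
        (1 - ((1 - Real.sqrt (1 - x * u)) / (x * u) * x) * u) :=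
  sqrt_one_add_gamma_general u x hu hx'
end

section
/- For every real number u with 0 < u and every real number x with 0 < x < 1/(2u), one has sqrt(1 - γ_x) = 1 - γ_{αx}, where α = α(x) = (1 - sqrt(1 - xu(3 - 2xu)))/(xu(3 - 2xu)). (Here γ_y := yu/(1 - yu) for real y with 0 ≤ y < 1/u.) -/
/-! With `t = x u`, both sides are rational in `t` and `q = √(1 - t(3 - 2t)) = √((1 - t)(1 - 2t))`:
the left side is `q / (1 - t)`, and `α x u = (1 - q) / (3 - 2t)`. The identity then reduces to
`q² = (1 - t)(1 - 2t)`. -/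

lemma Real.sqrt_one_sub_div_one_sub {t : ℝ} (ht : t ≤ 1 / 2) :
    √(1 - t / (1 - t)) = √(1 - t * (3 - 2 * t)) / (1 - t) := by
  have h1t : 1 - t ≠ 0 := by linarith
  have h : 1 - t / (1 - t) = (1 - t * (3 - 2 * t)) / (1 - t) ^ 2 := by field_simp; ring
  rw [h, Real.sqrt_div' _ (sq_nonneg _), Real.sqrt_sq (by linarith)]

lemma one_sub_div_one_sub_of_sq_eq {t q : ℝ} (ht : t < 1) (hq0 : 0 ≤ q)
    (hq : q ^ 2 = 1 - t * (3 - 2 * t)) :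
    1 - (1 - q) / (3 - 2 * t) / (1 - (1 - q) / (3 - 2 * t)) = q / (1 - t) := by
  have h1t : 1 - t ≠ 0 := by linarith
  have h3t : 3 - 2 * t ≠ 0 := by linarith
  have hw : 3 - 2 * t - (1 - q) ≠ 0 := by linarith
  rw [one_sub_div h3t, div_div_div_cancel_right₀ h3t, one_sub_div hw, div_eq_div_iff hw h1t]
  linear_combination -hq

/-- Fix a unit roundoff `u > 0` and define `γ y := y*u/(1 - y*u)`.
For `0 < x < 1/(2u)`, `sqrt (1 - γ x) = 1 - γ (α * x)` with
`α = (1 - sqrt (1 - x*u*(3 - 2*x*u))) / (x*u*(3 - 2*x*u))`. -/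
theorem sqrt_one_sub_gamma (u x : ℝ) (hu : 0 < u) (hx : 0 < x) (hx' : x < 1 / (2 * u)) :
    Real.sqrt (1 - x * u / (1 - x * u)) =
      1 - ((1 - Real.sqrt (1 - x * u * (3 - 2 * (x * u)))) / (x * u * (3 - 2 * (x * u))) * x) * u /
        (1 - ((1 - Real.sqrt (1 - x * u * (3 - 2 * (x * u)))) / (x * u * (3 - 2 * (x * u))) * x) * u) := by
  have ht : x * u < 1 / 2 := by
    have := (lt_div_iff₀ (by positivity)).mp hx'
    linarith
  have hαxu : ∀ a : ℝ, a / (x * u * (3 - 2 * (x * u))) * x * u = a / (3 - 2 * (x * u)) := by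
    intro a
    field_simp [hx.ne', hu.ne']
  rw [Real.sqrt_one_sub_div_one_sub ht.le, hαxu,
    one_sub_div_one_sub_of_sq_eq (by linarith) (Real.sqrt_nonneg _) (Real.sq_sqrt (by nlinarith))]
end

section
/- For every real number u with 0 < u and every real number x with 0 < x < 1/(2u), the quantity α(x) = (1 - sqrt(1 - xu(3 - 2xu)))/(xu(3 - 2xu)) satisfies 1/2 < α(x) < 1. -/
/-! Rationalising, `(1 - √(1 - s)) / s = 1 / (1 + √(1 - s))`, which lies strictly between `1/2`
and `1` as soon as `0 < s < 1`. With `t = x u ∈ (0, 1/2)` the quantity `s = t (3 - 2t)` is in that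
range, because `1 - s = (1 - t)(1 - 2t)`. -/

open Real Set

lemma one_sub_sqrt_one_sub_div_eq {s : ℝ} (hs0 : s ≠ 0) (hs1 : s ≤ 1) :
    (1 - √(1 - s)) / s = 1 / (1 + √(1 - s)) := by
  have hsq : √(1 - s) ^ 2 = 1 - s := sq_sqrt (by linarith)
  rw [div_eq_div_iff hs0 (by positivity)]
  linear_combination -hsq

lemma one_sub_sqrt_one_sub_div_mem_Ioo {s : ℝ} (hs : s ∈ Ioo 0 1) :
    (1 - √(1 - s)) / s ∈ Ioo (1 / 2) 1 := by
  obtain ⟨hs0, hs1⟩ := hs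
  have hr0 : 0 < √(1 - s) := sqrt_pos.mpr (by linarith)
  have hr1 : √(1 - s) < 1 := (sqrt_lt' one_pos).mpr (by linarith)
  rw [one_sub_sqrt_one_sub_div_eq hs0.ne' hs1.le]
  constructor
  · rw [div_lt_div_iff₀ two_pos (by positivity)]
    linarith
  · rw [div_lt_one (by positivity)]
    linarith

lemma mul_three_sub_two_mul_mem_Ioo {t : ℝ} (ht : t ∈ Ioo 0 (1 / 2)) :
    t * (3 - 2 * t) ∈ Ioo 0 1 := by
  obtain ⟨ht0, ht1⟩ := ht
  constructor
  · nlinarith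
  · nlinarith [mul_pos (sub_pos.mpr (ht1.trans one_half_lt_one)) (by linarith : 0 < 1 - 2 * t)]

/-- For `u > 0` and `0 < x < 1/(2u)`, the constant
`α(x) = (1 - sqrt (1 - x*u*(3 - 2*x*u))) / (x*u*(3 - 2*x*u))` satisfies `1/2 < α(x) < 1`. -/
theorem alpha_mem_Ioo (u x : ℝ) (hu : 0 < u) (hx : 0 < x) (hx' : x < 1 / (2 * u)) :
    1 / 2 < (1 - Real.sqrt (1 - x * u * (3 - 2 * (x * u)))) / (x * u * (3 - 2 * (x * u))) ∧
    (1 - Real.sqrt (1 - x * u * (3 - 2 * (x * u)))) / (x * u * (3 - 2 * (x * u))) < 1 := by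
  have hxu : x * u < 1 / 2 := by
    rw [lt_div_iff₀ (by positivity)] at hx'
    linarith
  exact one_sub_sqrt_one_sub_div_mem_Ioo (mul_three_sub_two_mul_mem_Ioo ⟨mul_pos hx hu, hxu⟩)
end

section
/- Let u > 0, let n ≥ 1 be a natural number with nu ≤ 1/2, let δ_1, …, δ_n be real numbers with |δ_i| ≤ u, and let ρ_1, …, ρ_n ∈ {+1, -1}. Define θ by 1 + θ = sqrt(∏_{i=1}^n (1 + δ_i)^{ρ_i}). Then |θ| ≤ γ_{α(n)·n}, where α(n) = (1 - sqrt(1 - nu(3 - 2nu)))/(nu(3 - 2nu)) and γ_y := yu/(1 - yu). -/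
/-!
Write `x = n u` and `t = α(n) n u = alpha x * x`. Each factor `(1 + δᵢ)^{±1}` lies in
`[1 - u, (1 - u)⁻¹]`, so by Bernoulli the product lies in `[1 - x, (1 - x)⁻¹]`. The constant `α`
is chosen so that `t` is the smaller root of `(3 - 2x) t² - 2t + x = 0`, which rearranges to
`(1 - t)² = 1 - x - 2(1 - x) t²`; hence `(1 - t)² ≤ 1 - x`, the square root of the product lies
in `[1 - t, (1 - t)⁻¹]`, and `|θ| ≤ t / (1 - t)`.
-/

noncomputable def alpha (x : ℝ) : ℝ := (1 - √(1 - x * (3 - 2 * x))) / (x * (3 - 2 * x))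

section Alpha

variable {x : ℝ}

lemma alpha_mul_mul_eq (hx0 : 0 < x) (hx : x ≤ 1 / 2) :
    alpha x * x * (3 - 2 * x) = 1 - √(1 - x * (3 - 2 * x)) := by
  have hc : x * (3 - 2 * x) ≠ 0 := by nlinarith
  rw [alpha, mul_assoc, div_mul_cancel₀ _ hc]

lemma alpha_mul_nonneg (hx0 : 0 < x) (hx : x ≤ 1 / 2) : 0 ≤ alpha x * x := by
  have hs : √(1 - x * (3 - 2 * x)) ≤ 1 := Real.sqrt_le_one.mpr (by nlinarith)
  have h := alpha_mul_mul_eq hx0 hx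
  nlinarith

lemma alpha_mul_le_half (hx0 : 0 < x) (hx : x ≤ 1 / 2) : alpha x * x ≤ 1 / 2 := by
  have hs := Real.sqrt_nonneg (1 - x * (3 - 2 * x))
  have h := alpha_mul_mul_eq hx0 hx
  nlinarith [alpha_mul_nonneg hx0 hx]

lemma alpha_mul_sq_mul_eq (hx0 : 0 < x) (hx : x ≤ 1 / 2) :
    (alpha x * x) ^ 2 * (3 - 2 * x) = 2 * (alpha x * x) - x := by
  have hs : √(1 - x * (3 - 2 * x)) ^ 2 = 1 - x * (3 - 2 * x) := Real.sq_sqrt (by nlinarith)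
  have h := alpha_mul_mul_eq hx0 hx
  have h3 : (3 - 2 * x) ≠ 0 := by linarith
  apply mul_right_cancel₀ h3
  linear_combination (alpha x * x * (3 - 2 * x) - 1 - √(1 - x * (3 - 2 * x))) * h + hs

lemma one_sub_alpha_mul_sq_le (hx0 : 0 < x) (hx : x ≤ 1 / 2) :
    (1 - alpha x * x) ^ 2 ≤ 1 - x := by
  have h := alpha_mul_sq_mul_eq hx0 hx
  nlinarith [mul_nonneg (sq_nonneg (alpha x * x)) (show 0 ≤ 1 - x by linarith)]

end Alpha

section Product

variable {ι : Type*} [Fintype ι] {u : ℝ} {δ : ι → ℝ} {ρ : ι → ℤ}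

lemma one_sub_le_one_add_zpow {d : ℝ} {r : ℤ} (hu : u < 1) (hd : |d| ≤ u)
    (hr : r = 1 ∨ r = -1) :
    1 - u ≤ (1 + d) ^ r := by
  obtain ⟨hd₁, hd₂⟩ := abs_le.mp hd
  rcases hr with rfl | rfl
  · rw [zpow_one]; linarith
  · rw [zpow_neg_one, le_inv_comm₀ (by linarith) (by linarith), inv_eq_one_div,
      le_div_iff₀ (by linarith)]
    nlinarith

lemma one_sub_pow_card_le_prod_zpow (hu : u < 1) (hδ : ∀ i, |δ i| ≤ u)
    (hρ : ∀ i, ρ i = 1 ∨ ρ i = -1) : (1 - u) ^ Fintype.card ι ≤ ∏ i, (1 + δ i) ^ ρ i := by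
  rw [← Finset.card_univ, ← Finset.prod_const]
  exact Finset.prod_le_prod (fun _ _ => by linarith)
    fun i _ => one_sub_le_one_add_zpow hu (hδ i) (hρ i)

lemma prod_zpow_le_inv_one_sub_pow_card (hu : u < 1) (hδ : ∀ i, |δ i| ≤ u)
    (hρ : ∀ i, ρ i = 1 ∨ ρ i = -1) : ∏ i, (1 + δ i) ^ ρ i ≤ ((1 - u) ^ Fintype.card ι)⁻¹ := by
  have hneg : ∀ i, -ρ i = 1 ∨ -ρ i = -1 := fun i => by rcases hρ i with h | h <;> simp [h]
  have hlow := one_sub_pow_card_le_prod_zpow hu hδ hneg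
  have hinv : ∏ i, (1 + δ i) ^ ρ i = (∏ i, (1 + δ i) ^ (-ρ i))⁻¹ := by
    simp only [zpow_neg, Finset.prod_inv_distrib, inv_inv]
  rw [hinv]
  exact inv_anti₀ (pow_pos (by linarith) _) hlow

end Product

lemma abs_sqrt_sub_one_le {P t : ℝ} (ht : t < 1) (hlo : (1 - t) ^ 2 ≤ P)
    (hhi : P ≤ ((1 - t) ^ 2)⁻¹) : |√P - 1| ≤ t / (1 - t) := by
  have h1t : 0 < 1 - t := by linarith
  have hlo' : 1 - t ≤ √P := Real.le_sqrt_of_sq_le hlo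
  have hhi' : √P ≤ (1 - t)⁻¹ := by
    simpa [Real.sqrt_inv, Real.sqrt_sq h1t.le] using Real.sqrt_le_sqrt hhi
  have hgap : t / (1 - t) = (1 - t)⁻¹ - 1 := by field_simp; ring
  have ht_le : t ≤ t / (1 - t) := by rw [le_div_iff₀ h1t]; nlinarith [sq_nonneg t]
  rw [abs_le]
  constructor <;> linarith

/-- Let `u > 0`, `n ≥ 1` with `n*u ≤ 1/2`, `|δ i| ≤ u` and `ρ i = ±1`.
If `1 + θ = sqrt (∏ i, (1 + δ i) ^ ρ i)`, then `|θ| ≤ γ (α n * n)`, where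
`α n = (1 - sqrt (1 - n*u*(3 - 2*n*u))) / (n*u*(3 - 2*n*u))` and `γ y = y*u/(1 - y*u)`. -/
theorem abs_theta_le_gamma_alpha_n (u : ℝ) (hu : 0 < u) (n : ℕ) (hn : 1 ≤ n)
    (hnu : (n : ℝ) * u ≤ 1 / 2)
    (δ : Fin n → ℝ) (hδ : ∀ i, |δ i| ≤ u)
    (ρ : Fin n → ℤ) (hρ : ∀ i, ρ i = 1 ∨ ρ i = -1)
    (θ : ℝ) (hθ : 1 + θ = Real.sqrt (∏ i, (1 + δ i) ^ ρ i)) :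
    |θ| ≤ ((1 - Real.sqrt (1 - (n : ℝ) * u * (3 - 2 * ((n : ℝ) * u)))) /
              ((n : ℝ) * u * (3 - 2 * ((n : ℝ) * u))) * n) * u /
          (1 - ((1 - Real.sqrt (1 - (n : ℝ) * u * (3 - 2 * ((n : ℝ) * u)))) /
              ((n : ℝ) * u * (3 - 2 * ((n : ℝ) * u))) * n) * u) := by
  have hx0 : 0 < (n : ℝ) * u := by positivity
  have hu1 : u < 1 := by
    have : u ≤ (n : ℝ) * u := le_mul_of_one_le_left hu.le (by exact_mod_cast hn)
    linarith
  have hsq : (1 - alpha (n * u) * (n * u)) ^ 2 ≤ (1 - u) ^ n := by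
    calc (1 - alpha (n * u) * (n * u)) ^ 2 ≤ 1 - n * u := one_sub_alpha_mul_sq_le hx0 hnu
      _ = 1 + n * (-u) := by ring
      _ ≤ (1 + -u) ^ n := one_add_mul_le_pow (by linarith) n
      _ = (1 - u) ^ n := by ring
  have hlo := one_sub_pow_card_le_prod_zpow hu1 hδ hρ
  have hhi := prod_zpow_le_inv_one_sub_pow_card hu1 hδ hρ
  rw [Fintype.card_fin] at hlo hhi
  change |θ| ≤ alpha (n * u) * n * u / (1 - alpha (n * u) * n * u)
  rw [mul_assoc (alpha _), show θ = √(∏ i, (1 + δ i) ^ ρ i) - 1 by linarith]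
  have ht : alpha (n * u) * (n * u) < 1 := by linarith [alpha_mul_le_half hx0 hnu]
  exact abs_sqrt_sub_one_le ht (hsq.trans hlo)
    (hhi.trans (inv_anti₀ (pow_pos (by linarith) 2) hsq))
end

section
/- Let u > 0, let n ≥ 1 be a natural number with nu < 1/2, let δ_1, …, δ_n be real numbers with |δ_i| ≤ u, and let ρ_1, …, ρ_n ∈ {+1, -1}. Then 0 < 1 - γ_n ≤ sqrt(1 - γ_n) ≤ sqrt(∏_{i=1}^n (1 + δ_i)^{ρ_i}) ≤ sqrt(1 + γ_n) ≤ 1 + γ_n, where γ_n := nu/(1 - nu). -/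
/-!
Every factor `(1 + δᵢ) ^ ρᵢ` lies in `[1 - u, (1 - u)⁻¹]`, an interval closed under inversion,
so the product lies in `[(1 - u) ^ n, (1 - u) ^ (-n)]`. Bernoulli's inequality
`1 - n u ≤ (1 - u) ^ n` and `(1 - n u)⁻¹ = 1 + γₙ` widen this to `[1 - γₙ, 1 + γₙ]`; since
`nu < 1/2` gives `0 ≤ γₙ < 1`, taking square roots finishes the chain.
-/

open Set

section Interval

variable {K : Type*} [Field K] [LinearOrder K] [IsStrictOrderedRing K]

theorem inv_mem_Icc_self_inv {a x : K} (ha : 0 < a) (hx : x ∈ Icc a a⁻¹) :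
    x⁻¹ ∈ Icc a a⁻¹ :=
  ⟨(le_inv_comm₀ ha (ha.trans_le hx.1)).2 hx.2, inv_anti₀ ha hx.1⟩

theorem Finset.prod_mem_Icc_pow_card {ι : Type*} (s : Finset ι) {f : ι → K} {a : K}
    (ha : 0 < a) (hf : ∀ i ∈ s, f i ∈ Set.Icc a a⁻¹) :
    ∏ i ∈ s, f i ∈ Set.Icc (a ^ s.card) (a ^ s.card)⁻¹ := by
  constructor
  · calc a ^ s.card = ∏ _i ∈ s, a := (Finset.prod_const a).symm
      _ ≤ ∏ i ∈ s, f i := Finset.prod_le_prod (fun _ _ ↦ ha.le) fun i hi ↦ (hf i hi).1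
  · calc ∏ i ∈ s, f i ≤ ∏ _i ∈ s, a⁻¹ :=
          Finset.prod_le_prod (fun i hi ↦ ha.le.trans (hf i hi).1) fun i hi ↦ (hf i hi).2
      _ = (a ^ s.card)⁻¹ := by rw [Finset.prod_const, inv_pow]

theorem one_add_mem_Icc_one_sub {u δ : K} (hu : u < 1) (hδ : |δ| ≤ u) :
    1 + δ ∈ Icc (1 - u) (1 - u)⁻¹ := by
  obtain ⟨hδ_lower, hδ_upper⟩ := abs_le.1 hδ
  have h_one_add : 1 + u ≤ (1 - u)⁻¹ := by
    rw [← one_div, le_div_iff₀ (sub_pos.2 hu)]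
    nlinarith
  exact ⟨by linarith, by linarith⟩

theorem one_add_zpow_mem_Icc_one_sub {u δ : K} (hu : u < 1) (hδ : |δ| ≤ u) {ρ : ℤ}
    (hρ : ρ = 1 ∨ ρ = -1) : (1 + δ) ^ ρ ∈ Icc (1 - u) (1 - u)⁻¹ := by
  have h := one_add_mem_Icc_one_sub hu hδ
  rcases hρ with rfl | rfl
  · simpa using h
  · simpa using inv_mem_Icc_self_inv (sub_pos.2 hu) h

end Interval

noncomputable def gamma (n : ℕ) (u : ℝ) : ℝ := n * u / (1 - n * u)

section Gamma

variable {n : ℕ} {u : ℝ}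

theorem gamma_nonneg (hu : 0 ≤ u) (hnu : n * u < 1) : 0 ≤ gamma n u :=
  div_nonneg (by positivity) (by linarith)

theorem gamma_lt_one (hnu : n * u < 1 / 2) : gamma n u < 1 := by
  rw [gamma, div_lt_one (by linarith)]
  linarith

theorem inv_one_sub_mul (hnu : n * u < 1) : (1 - n * u)⁻¹ = 1 + gamma n u := by
  rw [gamma]
  field_simp [(sub_pos.2 hnu).ne']
  ring

theorem Icc_one_sub_pow_subset_gamma (hu : 0 ≤ u) (hu₂ : u ≤ 2) (hnu : n * u < 1) :
    Icc ((1 - u) ^ n) ((1 - u) ^ n)⁻¹ ⊆ Icc (1 - gamma n u) (1 + gamma n u) := by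
  have h_bernoulli : 1 - n * u ≤ (1 - u) ^ n := by
    simpa [sub_eq_add_neg] using one_add_mul_le_pow (a := -u) (by linarith) n
  have h_le_gamma : n * u ≤ gamma n u := by
    rw [gamma, le_div_iff₀ (by linarith)]
    nlinarith [mul_nonneg (Nat.cast_nonneg n) hu]
  apply Icc_subset_Icc
  · linarith
  · rw [← inv_one_sub_mul hnu]
    exact inv_anti₀ (by linarith) h_bernoulli

end Gamma

/-- Let `u > 0`, `n ≥ 1` with `n*u < 1/2`, `|δ i| ≤ u` and `ρ i = ±1`.  With
`γ n = n*u/(1 - n*u)`, one has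
`0 < 1 - γ n ≤ sqrt (1 - γ n) ≤ sqrt (∏ i, (1 + δ i) ^ ρ i) ≤ sqrt (1 + γ n) ≤ 1 + γ n`. -/
theorem sqrt_prod_bounds (u : ℝ) (hu : 0 < u) (n : ℕ) (hn : 1 ≤ n)
    (hnu : (n : ℝ) * u < 1 / 2)
    (δ : Fin n → ℝ) (hδ : ∀ i, |δ i| ≤ u)
    (ρ : Fin n → ℤ) (hρ : ∀ i, ρ i = 1 ∨ ρ i = -1) :
    0 < 1 - (n : ℝ) * u / (1 - (n : ℝ) * u) ∧
    1 - (n : ℝ) * u / (1 - (n : ℝ) * u) ≤ Real.sqrt (1 - (n : ℝ) * u / (1 - (n : ℝ) * u)) ∧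
    Real.sqrt (1 - (n : ℝ) * u / (1 - (n : ℝ) * u)) ≤ Real.sqrt (∏ i, (1 + δ i) ^ ρ i) ∧
    Real.sqrt (∏ i, (1 + δ i) ^ ρ i) ≤ Real.sqrt (1 + (n : ℝ) * u / (1 - (n : ℝ) * u)) ∧
    Real.sqrt (1 + (n : ℝ) * u / (1 - (n : ℝ) * u)) ≤ 1 + (n : ℝ) * u / (1 - (n : ℝ) * u) := by
  have hu_lt_one : u < 1 := by
    have : (1 : ℝ) ≤ n := by exact_mod_cast hn
    nlinarith
  have hγ_nonneg := gamma_nonneg hu.le (n := n) (by linarith)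
  have hγ_lt_one := gamma_lt_one hnu
  have h_factors (i : Fin n) : (1 + δ i) ^ ρ i ∈ Icc (1 - u) (1 - u)⁻¹ :=
    one_add_zpow_mem_Icc_one_sub hu_lt_one (hδ i) (hρ i)
  have h_prod : ∏ i, (1 + δ i) ^ ρ i ∈ Icc (1 - gamma n u) (1 + gamma n u) :=
    Icc_one_sub_pow_subset_gamma hu.le (by linarith) (by linarith) <| by
      simpa using Finset.univ.prod_mem_Icc_pow_card (sub_pos.2 hu_lt_one) fun i _ ↦ h_factors i
  rw [gamma] at hγ_nonneg hγ_lt_one h_prod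
  exact ⟨sub_pos.2 hγ_lt_one, Real.le_sqrt_self_iff.2 (by linarith),
    Real.sqrt_le_sqrt h_prod.1, Real.sqrt_le_sqrt h_prod.2,
    Real.sqrt_le_self_iff.2 (Or.inr (by linarith))⟩
end

section
/- Let u > 0 and let a, b > 0 be real numbers with max(a, b)·u < 1. Let c ∈ ℝ and s ∈ ℂ satisfy c² + |s|² = 1. Let θ_a, θ_b ∈ ℝ with |θ_a| ≤ γ_a and |θ_b| ≤ γ_b, and set ĉ := c(1 + θ_a) and ŝ := s(1 + θ_b). Then σ := sqrt(ĉ² + |ŝ|²) satisfies |σ - 1| ≤ γ_m, where m := max(a, b) and γ_y := yu/(1 - yu). -/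
/-!
With `γ = max a b * u / (1 - max a b * u)`, monotonicity of `y ↦ y u / (1 - y u)` gives
`|θ_a|, |θ_b| ≤ γ`. Since `σ² = c² (1 + θ_a)² + |s|² (1 + θ_b)²` is a convex combination of
`(1 + θ_a)²` and `(1 + θ_b)²`, and both `|1 + θ|` lie in `[1 - γ, 1 + γ]`, so does `σ`.
-/

lemma div_one_sub_mul_le_div_one_sub_mul {u y z : ℝ} (hu : 0 ≤ u) (hyz : y ≤ z)
    (hz : z * u < 1) : y * u / (1 - y * u) ≤ z * u / (1 - z * u) := by
  have hyz' : y * u ≤ z * u := mul_le_mul_of_nonneg_right hyz hu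
  rw [div_le_div_iff₀ (by linarith) (by linarith)]
  nlinarith

lemma convex_comb_sq_le_sq {p q x y U : ℝ} (hp : 0 ≤ p) (hq : 0 ≤ q) (hpq : p + q = 1)
    (hx : |x| ≤ U) (hy : |y| ≤ U) :
    p * x ^ 2 + q * y ^ 2 ≤ U ^ 2 := by
  have hx2 : x ^ 2 ≤ U ^ 2 := sq_le_sq' (abs_le.mp hx).1 (abs_le.mp hx).2
  have hy2 : y ^ 2 ≤ U ^ 2 := sq_le_sq' (abs_le.mp hy).1 (abs_le.mp hy).2
  calc p * x ^ 2 + q * y ^ 2 ≤ p * U ^ 2 + q * U ^ 2 := by gcongr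
    _ = U ^ 2 := by rw [← add_mul, hpq, one_mul]

lemma sq_le_convex_comb_sq {p q x y L : ℝ} (hp : 0 ≤ p) (hq : 0 ≤ q) (hpq : p + q = 1)
    (hL : 0 ≤ L) (hx : L ≤ |x|) (hy : L ≤ |y|) :
    L ^ 2 ≤ p * x ^ 2 + q * y ^ 2 := by
  have hx2 : L ^ 2 ≤ x ^ 2 := by rw [← sq_abs x]; gcongr
  have hy2 : L ^ 2 ≤ y ^ 2 := by rw [← sq_abs y]; gcongr
  calc L ^ 2 = p * L ^ 2 + q * L ^ 2 := by rw [← add_mul, hpq, one_mul]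
    _ ≤ p * x ^ 2 + q * y ^ 2 := by gcongr

lemma abs_sqrt_convex_comb_sq_one_add_sub_one_le {p q x y g : ℝ} (hp : 0 ≤ p) (hq : 0 ≤ q)
    (hpq : p + q = 1) (hx : |x| ≤ g) (hy : |y| ≤ g) :
    |Real.sqrt (p * (1 + x) ^ 2 + q * (1 + y) ^ 2) - 1| ≤ g := by
  have hg : 0 ≤ g := (abs_nonneg x).trans hx
  have upper (t : ℝ) (ht : |t| ≤ g) : |1 + t| ≤ 1 + g :=
    (abs_add_le 1 t).trans (by rw [abs_one]; linarith)
  have lower (t : ℝ) (ht : |t| ≤ g) : 1 - g ≤ |1 + t| :=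
    le_trans (by linarith [(abs_le.mp ht).1]) (le_abs_self (1 + t))
  rw [abs_sub_le_iff, sub_le_iff_le_add', sub_le_comm]
  constructor
  · rw [Real.sqrt_le_left (by linarith)]
    exact convex_comb_sq_le_sq hp hq hpq (upper x hx) (upper y hy)
  · rcases le_total g 1 with hg1 | hg1
    · rw [Real.le_sqrt (by linarith) (by positivity)]
      exact sq_le_convex_comb_sq hp hq hpq (by linarith) (lower x hx) (lower y hy)
    · exact (sub_nonpos.mpr hg1).trans (Real.sqrt_nonneg _)

theorem sigma_near_one_general (u a b : ℝ) (hu : 0 < u)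
    (hab : max a b * u < 1)
    (c : ℝ) (s : ℂ) (hcs : c ^ 2 + ‖s‖ ^ 2 = 1)
    (θa θb : ℝ) (hθa : |θa| ≤ a * u / (1 - a * u)) (hθb : |θb| ≤ b * u / (1 - b * u)) :
    |Real.sqrt ((c * (1 + θa)) ^ 2 + ‖s * ((1 + θb : ℝ) : ℂ)‖ ^ 2) - 1| ≤
      max a b * u / (1 - max a b * u) := by
  have hσ : (c * (1 + θa)) ^ 2 + ‖s * ((1 + θb : ℝ) : ℂ)‖ ^ 2
      = c ^ 2 * (1 + θa) ^ 2 + ‖s‖ ^ 2 * (1 + θb) ^ 2 := by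
    simp only [norm_mul, Complex.norm_real, Real.norm_eq_abs, mul_pow, sq_abs]
  rw [hσ]
  exact abs_sqrt_convex_comb_sq_one_add_sub_one_le (sq_nonneg c) (sq_nonneg ‖s‖) hcs
    (hθa.trans (div_one_sub_mul_le_div_one_sub_mul hu.le (le_max_left a b) hab))
    (hθb.trans (div_one_sub_mul_le_div_one_sub_mul hu.le (le_max_right a b) hab))

/-- If `c² + |s|² = 1`, `ĉ = c(1 + θ_a)`, `ŝ = s(1 + θ_b)` with `|θ_a| ≤ γ a`,
`|θ_b| ≤ γ b`, then `σ = sqrt (ĉ² + |ŝ|²)` satisfies `|σ - 1| ≤ γ (max a b)`,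
where `γ y = y*u/(1 - y*u)`. -/
theorem sigma_near_one (u a b : ℝ) (hu : 0 < u) (ha : 0 < a) (hb : 0 < b)
    (hab : max a b * u < 1)
    (c : ℝ) (s : ℂ) (hcs : c ^ 2 + ‖s‖ ^ 2 = 1)
    (θa θb : ℝ) (hθa : |θa| ≤ a * u / (1 - a * u)) (hθb : |θb| ≤ b * u / (1 - b * u)) :
    |Real.sqrt ((c * (1 + θa)) ^ 2 + ‖s * ((1 + θb : ℝ) : ℂ)‖ ^ 2) - 1| ≤
      max a b * u / (1 - max a b * u) :=
  sigma_near_one_general u a b hu hab c s hcs θa θb hθa hθb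
end

section
/- Let u be a real number with 0 < u ≤ 1/24. Let f, g ∈ ℝ with (f, g) ≠ (0, 0), and let δ_1, δ_2, δ_3, δ_4, δ_5 be real numbers with |δ_i| ≤ u for all i. Define ĉ := f·(1 + δ_5) / ( sqrt((f²(1 + δ_1) + g²(1 + δ_2))·(1 + δ_3)) · (1 + δ_4) ). Then |ĉ - c| ≤ γ_4·|c|, where c := f/sqrt(f² + g²) and γ_4 := 4u/(1 - 4u). -/
/-!
Write `f²(1 + δ₁) + g²(1 + δ₂) = (f² + g²)(1 + θ)` with `|θ| ≤ u`. Then the computed denominator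
is `√(f² + g²) · ρ` with `ρ = √((1 + θ)(1 + δ₃))(1 + δ₄) ∈ [(1 - u)², (1 + u)²]`, so that
`ĉ = c · (1 + δ₅)/ρ`, and `|(1 + δ₅)/ρ - 1| ≤ (3u + u²)/(1 - u)² ≤ γ₄`.
-/

open Set

namespace RoundingError

variable {u : ℝ}

theorem one_add_mem_Icc {δ : ℝ} (h : |δ| ≤ u) : 1 + δ ∈ Icc (1 - u) (1 + u) := by
  obtain ⟨hl, hr⟩ := abs_le.mp h
  constructor <;> linarith

theorem exists_add_mul_eq_mul_one_add {a b δ₁ δ₂ : ℝ} (ha : 0 ≤ a) (hb : 0 ≤ b)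
    (h₁ : |δ₁| ≤ u) (h₂ : |δ₂| ≤ u) :
    ∃ θ, |θ| ≤ u ∧ a * (1 + δ₁) + b * (1 + δ₂) = (a + b) * (1 + θ) := by
  rcases (add_nonneg ha hb).eq_or_lt with hab | hab
  · refine ⟨0, by rw [abs_zero]; exact (abs_nonneg δ₁).trans h₁, ?_⟩
    have ha0 : a = 0 := by linarith
    have hb0 : b = 0 := by linarith
    simp [ha0, hb0]
  · refine ⟨(a * δ₁ + b * δ₂) / (a + b), ?_, by field_simp; ring⟩
    obtain ⟨h₁l, h₁r⟩ := abs_le.mp h₁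
    obtain ⟨h₂l, h₂r⟩ := abs_le.mp h₂
    rw [abs_le, le_div_iff₀ hab, div_le_iff₀ hab]
    constructor <;> nlinarith

theorem mul_mem_Icc_sq {x y : ℝ} (hu : u ≤ 1) (hx : x ∈ Icc (1 - u) (1 + u))
    (hy : y ∈ Icc (1 - u) (1 + u)) : x * y ∈ Icc ((1 - u) ^ 2) ((1 + u) ^ 2) := by
  rw [sq, sq]
  exact ⟨mul_le_mul hx.1 hy.1 (by linarith) (by linarith [hx.1]),
    mul_le_mul hx.2 hy.2 (by linarith [hy.1]) (by linarith [hx.1, hx.2])⟩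

theorem sqrt_mem_Icc {x : ℝ} (hu : u ≤ 1) (hx : x ∈ Icc ((1 - u) ^ 2) ((1 + u) ^ 2)) :
    √x ∈ Icc (1 - u) (1 + u) := by
  have hu₀ : 0 ≤ 1 + u := by nlinarith [hx.1, hx.2, sq_nonneg (1 - u)]
  constructor
  · simpa [Real.sqrt_sq (sub_nonneg.mpr hu)] using Real.sqrt_le_sqrt hx.1
  · simpa [Real.sqrt_sq hu₀] using Real.sqrt_le_sqrt hx.2

theorem abs_div_sub_one_le {δ ρ : ℝ} (hu : u < 1 / 4) (hδ : |δ| ≤ u)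
    (hρ : ρ ∈ Icc ((1 - u) ^ 2) ((1 + u) ^ 2)) :
    |(1 + δ) / ρ - 1| ≤ 4 * u / (1 - 4 * u) := by
  have hu₀ : 0 ≤ u := (abs_nonneg δ).trans hδ
  obtain ⟨hδl, hδr⟩ := abs_le.mp hδ
  have hρ₀ : 0 < ρ := lt_of_lt_of_le (by nlinarith) hρ.1
  have hnum : |1 + δ - ρ| ≤ 3 * u + u ^ 2 := by
    rw [abs_le]
    constructor <;> nlinarith [hρ.1, hρ.2]
  rw [div_sub_one hρ₀.ne', abs_div, abs_of_pos hρ₀, div_le_div_iff₀ hρ₀ (by linarith)]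
  calc |1 + δ - ρ| * (1 - 4 * u) ≤ (3 * u + u ^ 2) * (1 - 4 * u) := by gcongr; linarith
    _ ≤ 4 * u * (1 - u) ^ 2 := by nlinarith
    _ ≤ 4 * u * ρ := by gcongr; exact hρ.1

end RoundingError

open RoundingError in
theorem real_givens_c_error_general (u : ℝ) (hu' : u ≤ 1 / 24)
    (f g : ℝ)
    (δ₁ δ₂ δ₃ δ₄ δ₅ : ℝ) (h₁ : |δ₁| ≤ u) (h₂ : |δ₂| ≤ u) (h₃ : |δ₃| ≤ u)
    (h₄ : |δ₄| ≤ u) (h₅ : |δ₅| ≤ u) :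
    |f * (1 + δ₅) /
        (Real.sqrt ((f ^ 2 * (1 + δ₁) + g ^ 2 * (1 + δ₂)) * (1 + δ₃)) * (1 + δ₄)) -
      f / Real.sqrt (f ^ 2 + g ^ 2)| ≤
    4 * u / (1 - 4 * u) * |f / Real.sqrt (f ^ 2 + g ^ 2)| := by
  have hu : u ≤ 1 := by linarith
  obtain ⟨θ, hθ, hsum⟩ := exists_add_mul_eq_mul_one_add (sq_nonneg f) (sq_nonneg g) h₁ h₂
  set ρ := √((1 + θ) * (1 + δ₃)) * (1 + δ₄)
  have hρ : ρ ∈ Icc ((1 - u) ^ 2) ((1 + u) ^ 2) :=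
    mul_mem_Icc_sq hu (sqrt_mem_Icc hu (mul_mem_Icc_sq hu (one_add_mem_Icc hθ)
      (one_add_mem_Icc h₃))) (one_add_mem_Icc h₄)
  have hden : √((f ^ 2 * (1 + δ₁) + g ^ 2 * (1 + δ₂)) * (1 + δ₃)) * (1 + δ₄) =
      √(f ^ 2 + g ^ 2) * ρ := by
    rw [hsum, mul_assoc, Real.sqrt_mul (by positivity), mul_assoc]
  rw [hden, mul_div_mul_comm, ← mul_sub_one, abs_mul, mul_comm]
  exact mul_le_mul_of_nonneg_right (abs_div_sub_one_le (by linarith) h₅ hρ) (abs_nonneg _)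

/-- Worst-case error of the straightforward computation of `c = f/sqrt (f² + g²)` in real
arithmetic: with rounding errors `|δ_i| ≤ u ≤ 1/24`, the computed
`ĉ = f(1 + δ_5)/(sqrt ((f²(1 + δ_1) + g²(1 + δ_2))(1 + δ_3))·(1 + δ_4))` satisfies
`|ĉ - c| ≤ γ_4·|c|`, where `γ_4 = 4u/(1 - 4u)`. -/
theorem real_givens_c_error (u : ℝ) (hu : 0 < u) (hu' : u ≤ 1 / 24)
    (f g : ℝ) (hfg : (f, g) ≠ (0, 0))
    (δ₁ δ₂ δ₃ δ₄ δ₅ : ℝ) (h₁ : |δ₁| ≤ u) (h₂ : |δ₂| ≤ u) (h₃ : |δ₃| ≤ u)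
    (h₄ : |δ₄| ≤ u) (h₅ : |δ₅| ≤ u) :
    |f * (1 + δ₅) /
        (Real.sqrt ((f ^ 2 * (1 + δ₁) + g ^ 2 * (1 + δ₂)) * (1 + δ₃)) * (1 + δ₄)) -
      f / Real.sqrt (f ^ 2 + g ^ 2)| ≤
    4 * u / (1 - 4 * u) * |f / Real.sqrt (f ^ 2 + g ^ 2)| :=
  real_givens_c_error_general u hu' f g δ₁ δ₂ δ₃ δ₄ δ₅ h₁ h₂ h₃ h₄ h₅
end

section
/- Let u be a real number with 0 < u ≤ 1/24. Let f, g ∈ ℝ with (f, g) ≠ (0, 0), and let δ_1, δ_2, δ_3, δ_4 be real numbers with |δ_i| ≤ u for all i. Define r̂ := sqrt((f²(1 + δ_1) + g²(1 + δ_2))·(1 + δ_3)) · (1 + δ_4). Then |r̂ - r| ≤ γ_3·r, where r := sqrt(f² + g²) and γ_3 := 3u/(1 - 3u). -/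
/-!
Every factor `1 + δᵢ` lies in `[1 - u, 1 + u]`, so the radicand lies between `(1 - u)² r²` and
`(1 + u)² r²`. Taking the square root and multiplying by `1 + δ₄` puts `r̂` between `(1 - u)² r`
and `(1 + u)² r`, hence `|r̂ - r| ≤ ((1 + u)² - 1) r = (2u + u²) r ≤ γ₃ r`.
-/

open Real

namespace RoundingError

variable {u δ ε : ℝ}

theorem sq_one_sub_le_one_add_mul_one_add (hu : u ≤ 1) (hδ : |δ| ≤ u) (hε : |ε| ≤ u) :
    (1 - u) ^ 2 ≤ (1 + δ) * (1 + ε) := by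
  obtain ⟨hδl, -⟩ := abs_le.mp hδ
  obtain ⟨hεl, -⟩ := abs_le.mp hε
  nlinarith [mul_nonneg (by linarith : 0 ≤ u + δ) (by linarith : 0 ≤ u + ε)]

theorem one_add_mul_one_add_le_sq_one_add (hδ : |δ| ≤ u) (hε : |ε| ≤ u) :
    (1 + δ) * (1 + ε) ≤ (1 + u) ^ 2 := by
  obtain ⟨hδl, hδr⟩ := abs_le.mp hδ
  obtain ⟨hεl, hεr⟩ := abs_le.mp hε
  nlinarith [mul_nonneg (by linarith : 0 ≤ u - δ) (by linarith : 0 ≤ 2 + u + ε),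
    mul_nonneg (by linarith : 0 ≤ u - ε) (by linarith : 0 ≤ 2 + u + δ)]

theorem two_mul_add_sq_le_div (hu : 0 ≤ u) (hu3 : 3 * u < 1) :
    2 * u + u ^ 2 ≤ 3 * u / (1 - 3 * u) := by
  rw [le_div_iff₀ (by linarith)]
  nlinarith [pow_nonneg hu 3]

variable {a b δ₁ δ₂ δ₃ : ℝ}

theorem sq_one_sub_mul_le_weighted_sum (ha : 0 ≤ a) (hb : 0 ≤ b) (hu : u ≤ 1)
    (h₁ : |δ₁| ≤ u) (h₂ : |δ₂| ≤ u) (h₃ : |δ₃| ≤ u) :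
    (1 - u) ^ 2 * (a + b) ≤ (a * (1 + δ₁) + b * (1 + δ₂)) * (1 + δ₃) := by
  nlinarith [mul_le_mul_of_nonneg_left (sq_one_sub_le_one_add_mul_one_add hu h₁ h₃) ha,
    mul_le_mul_of_nonneg_left (sq_one_sub_le_one_add_mul_one_add hu h₂ h₃) hb]

theorem weighted_sum_le_sq_one_add_mul (ha : 0 ≤ a) (hb : 0 ≤ b)
    (h₁ : |δ₁| ≤ u) (h₂ : |δ₂| ≤ u) (h₃ : |δ₃| ≤ u) :
    (a * (1 + δ₁) + b * (1 + δ₂)) * (1 + δ₃) ≤ (1 + u) ^ 2 * (a + b) := by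
  nlinarith [mul_le_mul_of_nonneg_left (one_add_mul_one_add_le_sq_one_add h₁ h₃) ha,
    mul_le_mul_of_nonneg_left (one_add_mul_one_add_le_sq_one_add h₂ h₃) hb]

theorem mul_sqrt_le_sqrt_of_sq_mul_le {c x y : ℝ} (hc : 0 ≤ c) (h : c ^ 2 * x ≤ y) :
    c * √x ≤ √y := by
  rw [← sqrt_sq hc, ← sqrt_mul (sq_nonneg c)]
  exact sqrt_le_sqrt h

theorem sqrt_le_mul_sqrt_of_le_sq_mul {c x y : ℝ} (hc : 0 ≤ c) (h : y ≤ c ^ 2 * x) :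
    √y ≤ c * √x := by
  rw [← sqrt_sq hc, ← sqrt_mul (sq_nonneg c)]
  exact sqrt_le_sqrt h

theorem abs_mul_one_add_sub_le {r s : ℝ} (hr : 0 ≤ r) (hu : u ≤ 1) (hδ : |δ| ≤ u)
    (hs_lo : (1 - u) * r ≤ s) (hs_hi : s ≤ (1 + u) * r) :
    |s * (1 + δ) - r| ≤ (2 * u + u ^ 2) * r := by
  obtain ⟨hδl, hδr⟩ := abs_le.mp hδ
  have hs : 0 ≤ s := (mul_nonneg (by linarith) hr).trans hs_lo
  rw [abs_le]
  constructor
  · nlinarith [mul_le_mul hs_lo (by linarith : 1 - u ≤ 1 + δ) (by linarith) hs]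
  · nlinarith [mul_le_mul hs_hi (by linarith : 1 + δ ≤ 1 + u) (by linarith) (by nlinarith)]

end RoundingError

open RoundingError in
theorem real_givens_r_error_general (u : ℝ) (hu' : u ≤ 1 / 24)
    (f g : ℝ)
    (δ₁ δ₂ δ₃ δ₄ : ℝ) (h₁ : |δ₁| ≤ u) (h₂ : |δ₂| ≤ u) (h₃ : |δ₃| ≤ u) (h₄ : |δ₄| ≤ u) :
    |Real.sqrt ((f ^ 2 * (1 + δ₁) + g ^ 2 * (1 + δ₂)) * (1 + δ₃)) * (1 + δ₄) -
      Real.sqrt (f ^ 2 + g ^ 2)| ≤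
    3 * u / (1 - 3 * u) * Real.sqrt (f ^ 2 + g ^ 2) := by
  have hu : 0 ≤ u := (abs_nonneg δ₁).trans h₁
  have hs_lo := mul_sqrt_le_sqrt_of_sq_mul_le (by linarith)
    (sq_one_sub_mul_le_weighted_sum (sq_nonneg f) (sq_nonneg g) (by linarith) h₁ h₂ h₃)
  have hs_hi := sqrt_le_mul_sqrt_of_le_sq_mul (by linarith)
    (weighted_sum_le_sq_one_add_mul (sq_nonneg f) (sq_nonneg g) h₁ h₂ h₃)
  calc _ ≤ (2 * u + u ^ 2) * √(f ^ 2 + g ^ 2) :=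
        abs_mul_one_add_sub_le (sqrt_nonneg _) (by linarith) h₄ hs_lo hs_hi
    _ ≤ 3 * u / (1 - 3 * u) * √(f ^ 2 + g ^ 2) := by
        gcongr
        exact two_mul_add_sq_le_div hu (by linarith)

/-- Worst-case error of the straightforward computation of `r = sqrt (f² + g²)` in real
arithmetic: with rounding errors `|δ_i| ≤ u ≤ 1/24`, the computed
`r̂ = sqrt ((f²(1 + δ_1) + g²(1 + δ_2))(1 + δ_3))·(1 + δ_4)` satisfies
`|r̂ - r| ≤ γ_3·r`, where `γ_3 = 3u/(1 - 3u)`. -/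
theorem real_givens_r_error (u : ℝ) (hu : 0 < u) (hu' : u ≤ 1 / 24)
    (f g : ℝ) (hfg : (f, g) ≠ (0, 0))
    (δ₁ δ₂ δ₃ δ₄ : ℝ) (h₁ : |δ₁| ≤ u) (h₂ : |δ₂| ≤ u) (h₃ : |δ₃| ≤ u) (h₄ : |δ₄| ≤ u) :
    |Real.sqrt ((f ^ 2 * (1 + δ₁) + g ^ 2 * (1 + δ₂)) * (1 + δ₃)) * (1 + δ₄) -
      Real.sqrt (f ^ 2 + g ^ 2)| ≤
    3 * u / (1 - 3 * u) * Real.sqrt (f ^ 2 + g ^ 2) :=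
  real_givens_r_error_general u hu' f g δ₁ δ₂ δ₃ δ₄ h₁ h₂ h₃ h₄
end

section
/- Let u be a real number with 0 < u ≤ 1/24. Let f, g ∈ ℂ with f ≠ 0, and let δ_1, δ_1', δ_2, δ_2', δ_3, δ_4, δ_5, δ_6, δ_7 be real numbers each with absolute value at most u. Define f₂ := ((Re f)²(1 + δ_1) + (Im f)²(1 + δ_1'))·(1 + δ_3) and g₂ := ((Re g)²(1 + δ_2) + (Im g)²(1 + δ_2'))·(1 + δ_4). Define ĉ := sqrt( (f₂ / ((f₂ + g₂)(1 + δ_5))) · (1 + δ_6) ) · (1 + δ_7). Then |ĉ - c| ≤ γ_5·c, where c := |f|/sqrt(|f|² + |g|²) and γ_5 := 5u/(1 - 5u). (This is the worst-case error bound for the cosine computed by the proposed new complex Givens rotation algorithm.) -/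
/-!
Every computed quantity is the exact one times a factor in some interval `[l, h]`
(`RelApprox x y l h`). Such bounds are preserved by sums, multiply under products, become
`[l / h', h / l']` under quotients and `[√l, √h]` under square roots, and each rounding
contributes a factor in `[1 - u, 1 + u]`. Hence `ĉ = c θ` with
`(1 - u)^(5/2) / (1 + u)^(3/2) ≤ θ ≤ (1 + u)^(5/2) / (1 - u)^(3/2)`; for `u ≤ 1/24` both
endpoints lie within `γ₅` of `1`, which after squaring are two polynomial inequalities.
-/

def RelApprox (x y l h : ℝ) : Prop := y * l ≤ x ∧ x ≤ y * h

namespace RelApprox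

variable {x y l h x' y' l' h' u δ : ℝ}

theorem add (hx : RelApprox x y l h) (hx' : RelApprox x' y' l h) :
    RelApprox (x + x') (y + y') l h :=
  ⟨by linarith [hx.1, hx'.1], by linarith [hx.2, hx'.2]⟩

theorem mul (hx : RelApprox x y l h) (hx' : RelApprox x' y' l' h') (hy : 0 ≤ y) (hl : 0 ≤ l)
    (hy' : 0 ≤ y') (hl' : 0 ≤ l') : RelApprox (x * x') (y * y') (l * l') (h * h') := by
  have hx₀ : 0 ≤ x := (mul_nonneg hy hl).trans hx.1
  have hx'₀ : 0 ≤ x' := (mul_nonneg hy' hl').trans hx'.1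
  constructor
  · calc y * y' * (l * l') = y * l * (y' * l') := by ring
      _ ≤ x * x' := mul_le_mul hx.1 hx'.1 (mul_nonneg hy' hl') hx₀
  · calc x * x' ≤ y * h * (y' * h') := mul_le_mul hx.2 hx'.2 hx'₀ (hx₀.trans hx.2)
      _ = y * y' * (h * h') := by ring

theorem div (hx : RelApprox x y l h) (hx' : RelApprox x' y' l' h') (hy : 0 ≤ y) (hl : 0 ≤ l)
    (hy' : 0 < y') (hl' : 0 < l') : RelApprox (x / x') (y / y') (l / h') (h / l') := by
  have hx'₀ : 0 < y' * l' := mul_pos hy' hl'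
  constructor
  · rw [div_mul_div_comm]
    exact div_le_div₀ ((mul_nonneg hy hl).trans hx.1) hx.1 (hx'₀.trans_le hx'.1) hx'.2
  · rw [div_mul_div_comm]
    exact div_le_div₀ ((mul_nonneg hy hl).trans (hx.1.trans hx.2)) hx.2 hx'₀ hx'.1

theorem sqrt (hx : RelApprox x y l h) (hy : 0 ≤ y) :
    RelApprox (√x) (√y) (√l) (√h) := by
  rw [RelApprox, ← Real.sqrt_mul hy, ← Real.sqrt_mul hy]
  exact ⟨Real.sqrt_le_sqrt hx.1, Real.sqrt_le_sqrt hx.2⟩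

theorem of_abs_le (hy : 0 ≤ y) (hδ : |δ| ≤ u) : RelApprox (y * (1 + δ)) y (1 - u) (1 + u) := by
  obtain ⟨hδl, hδu⟩ := abs_le.mp hδ
  exact ⟨mul_le_mul_of_nonneg_left (by linarith) hy, mul_le_mul_of_nonneg_left (by linarith) hy⟩

theorem mul_one_add (hx : RelApprox x y l h) (hy : 0 ≤ y) (hl : 0 ≤ l) (hu : u ≤ 1)
    (hδ : |δ| ≤ u) : RelApprox (x * (1 + δ)) y (l * (1 - u)) (h * (1 + u)) := by
  simpa only [one_mul, mul_one] using
    hx.mul (of_abs_le zero_le_one hδ) hy hl zero_le_one (sub_nonneg.2 hu)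

theorem abs_sub_le {e : ℝ} (hx : RelApprox x y l h) (hy : 0 ≤ y) (hl : 1 - e ≤ l)
    (hh : h ≤ 1 + e) : |x - y| ≤ e * y := by
  have := mul_le_mul_of_nonneg_left hl hy
  have := mul_le_mul_of_nonneg_left hh hy
  rw [abs_le]
  constructor <;> linarith [hx.1, hx.2]

end RelApprox

theorem relApprox_sq_norm_rounded (z : ℂ) {u δ δ' δ'' : ℝ} (hu : u ≤ 1) (hδ : |δ| ≤ u)
    (hδ' : |δ'| ≤ u) (hδ'' : |δ''| ≤ u) :
    RelApprox ((z.re ^ 2 * (1 + δ) + z.im ^ 2 * (1 + δ')) * (1 + δ'')) (‖z‖ ^ 2)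
      ((1 - u) ^ 2) ((1 + u) ^ 2) := by
  rw [Complex.sq_norm, Complex.normSq_apply, ← sq, ← sq, sq (1 - u), sq (1 + u)]
  exact ((RelApprox.of_abs_le (sq_nonneg _) hδ).add
    (RelApprox.of_abs_le (sq_nonneg _) hδ')).mul_one_add (by positivity) (by linarith) hu hδ''

theorem sqrt_div_mul_one_add_le (u : ℝ) (hu : 0 < u) (hu' : u ≤ 1 / 24) :
    √((1 + u) ^ 3 / (1 - u) ^ 3) * (1 + u) ≤ 1 + 5 * u / (1 - 5 * u) := by
  have h5 : 0 < 1 - 5 * u := by linarith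
  have h1 : 0 < 1 - u := by linarith
  have key : (1 + u) ^ 5 * (1 - 5 * u) ^ 2 ≤ (1 - u) ^ 3 := by
    nlinarith [pow_pos hu 2, pow_pos hu 3, pow_pos hu 4, pow_pos hu 5, pow_pos hu 6]
  rw [show 1 + 5 * u / (1 - 5 * u) = 1 / ((1 - 5 * u) * (1 + u)) * (1 + u) by field_simp; ring]
  gcongr
  rw [Real.sqrt_le_iff, div_pow, one_pow, div_le_div_iff₀ (by positivity) (by positivity)]
  exact ⟨by positivity, by linear_combination key⟩

theorem le_sqrt_div_mul_one_sub (u : ℝ) (hu : 0 < u) (hu' : u ≤ 1 / 24) :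
    1 - 5 * u / (1 - 5 * u) ≤ √((1 - u) ^ 3 / (1 + u) ^ 3) * (1 - u) := by
  have h5 : 0 < 1 - 5 * u := by linarith
  have h1 : 0 < 1 - u := by linarith
  have h10 : 0 ≤ 1 - 10 * u := by linarith
  have key : (1 - 10 * u) ^ 2 * (1 + u) ^ 3 ≤ (1 - u) ^ 5 * (1 - 5 * u) ^ 2 := by
    nlinarith [pow_pos hu 2, pow_pos hu 3, pow_pos hu 4, pow_pos hu 5, pow_pos hu 6]
  rw [show 1 - 5 * u / (1 - 5 * u) = (1 - 10 * u) / ((1 - 5 * u) * (1 - u)) * (1 - u) by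
    field_simp; ring]
  gcongr
  rw [Real.le_sqrt (by positivity) (by positivity), div_pow,
    div_le_div_iff₀ (by positivity) (by positivity)]
  linear_combination key

/-- Worst-case error of the cosine in the proposed new complex Givens algorithm: with
`f ≠ 0`, rounding errors bounded by `u ≤ 1/24`, and the computed squared moduli
`f₂, g₂`, the computed `ĉ = sqrt ((f₂/((f₂ + g₂)(1 + δ_5)))·(1 + δ_6))·(1 + δ_7)`
satisfies `|ĉ - c| ≤ γ_5·c`, where `c = |f|/sqrt (|f|² + |g|²)` and `γ_5 = 5u/(1 - 5u)`. -/
theorem new_clartg_c_error (u : ℝ) (hu : 0 < u) (hu' : u ≤ 1 / 24)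
    (f g : ℂ) (hf : f ≠ 0)
    (δ₁ δ₁' δ₂ δ₂' δ₃ δ₄ δ₅ δ₆ δ₇ : ℝ)
    (h₁ : |δ₁| ≤ u) (h₁' : |δ₁'| ≤ u) (h₂ : |δ₂| ≤ u) (h₂' : |δ₂'| ≤ u)
    (h₃ : |δ₃| ≤ u) (h₄ : |δ₄| ≤ u) (h₅ : |δ₅| ≤ u) (h₆ : |δ₆| ≤ u) (h₇ : |δ₇| ≤ u) :
    let f₂ : ℝ := (f.re ^ 2 * (1 + δ₁) + f.im ^ 2 * (1 + δ₁')) * (1 + δ₃)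
    let g₂ : ℝ := (g.re ^ 2 * (1 + δ₂) + g.im ^ 2 * (1 + δ₂')) * (1 + δ₄)
    let c : ℝ := ‖f‖ / Real.sqrt (‖f‖ ^ 2 + ‖g‖ ^ 2)
    |Real.sqrt (f₂ / ((f₂ + g₂) * (1 + δ₅)) * (1 + δ₆)) * (1 + δ₇) - c| ≤
      5 * u / (1 - 5 * u) * c := by
  intro f₂ g₂ c
  have hu₁ : u ≤ 1 := by linarith
  have h1u : 0 < 1 - u := by linarith
  have hl₃ : 0 < (1 - u) ^ 2 * (1 - u) := mul_pos (pow_pos h1u 2) h1u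
  have hf₂ := relApprox_sq_norm_rounded f hu₁ h₁ h₁' h₃
  have hg₂ := relApprox_sq_norm_rounded g hu₁ h₂ h₂' h₄
  have hnum := hf₂.mul_one_add (by positivity) (sq_nonneg _) hu₁ h₆
  have hden := (hf₂.add hg₂).mul_one_add (by positivity) (sq_nonneg _) hu₁ h₅
  have hF : 0 < ‖f‖ ^ 2 + ‖g‖ ^ 2 :=
    add_pos_of_pos_of_nonneg (pow_pos (norm_pos_iff.2 hf) 2) (sq_nonneg _)
  have hq := hnum.div hden (sq_nonneg _) hl₃.le hF hl₃
  have hc := (hq.sqrt (by positivity)).mul_one_add (by positivity) (Real.sqrt_nonneg _) hu₁ h₇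
  rw [← div_mul_eq_mul_div, Real.sqrt_div (sq_nonneg _), Real.sqrt_sq (norm_nonneg _)] at hc
  simp only [← pow_succ] at hc
  exact hc.abs_sub_le (by positivity) (le_sqrt_div_mul_one_sub u hu hu')
    (sqrt_div_mul_one_add_le u hu hu')
end

section
/- Let u be a real number with 0 < u ≤ 1/24. Let f, g ∈ ℂ with f ≠ 0, and let δ_1, δ_1', δ_2, δ_2', δ_3, δ_4, δ_h, δ_a, δ_b, δ_c, δ_d be real numbers each with absolute value at most u. Define f₂ := ((Re f)²(1 + δ_1) + (Im f)²(1 + δ_1'))·(1 + δ_3), g₂ := ((Re g)²(1 + δ_2) + (Im g)²(1 + δ_2'))·(1 + δ_4), and h₂ := (f₂ + g₂)·(1 + δ_h). Define ĉ := f₂·(1 + δ_c)·(1 + δ_d) / ( sqrt( f₂·h₂·(1 + δ_a) ) · (1 + δ_b) ). Then |ĉ - c| ≤ γ_7·c, where c := |f|/sqrt(|f|² + |g|²) and γ_7 := 7u/(1 - 7u). (This is the worst-case error bound for the cosine computed by the LAPACK 3.10 complex Givens rotation algorithm, which forms p = 1/sqrt(f₂·h₂) and returns c = f₂·p.) -/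
/-!
Every computed quantity `x'` stays in the bracket `x (1 - u)ᵏ ≤ x' ≤ x (1 + u)ᵏ`, where `k` counts
the roundings it went through; such brackets add, multiply, and halve under a square root.
Since `f₂ ≥ 0`, the computed cosine equals `√f₂ (1 + δc)(1 + δd) / (√(h₂ (1 + δa)) (1 + δb))`:
one factor `√f₂` cancels, so numerator and denominator are each within three roundings of `|f|`
and of `√(|f|² + |g|²)`, and `(1 + u)³ / (1 - u)³ - 1 ≤ γ₇`.
-/

def WithinErr (u : ℝ) (k : ℕ) (x x' : ℝ) : Prop :=
  x * (1 - u) ^ k ≤ x' ∧ x' ≤ x * (1 + u) ^ k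

namespace WithinErr

variable {u x y x' y' δ : ℝ} {k m : ℕ}

theorem refl (u x : ℝ) : WithinErr u 0 x x := by
  simp [WithinErr]

theorem one_add (hδ : |δ| ≤ u) : WithinErr u 1 1 (1 + δ) := by
  obtain ⟨hl, hr⟩ := abs_le.mp hδ
  constructor <;> linarith

theorem nonneg (h : WithinErr u k x x') (hx : 0 ≤ x) (hu : u ≤ 1) : 0 ≤ x' :=
  le_trans (mul_nonneg hx (pow_nonneg (by linarith) k)) h.1

theorem add (h : WithinErr u k x x') (h' : WithinErr u k y y') :
    WithinErr u k (x + y) (x' + y') := by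
  obtain ⟨hl, hr⟩ := h
  obtain ⟨hl', hr'⟩ := h'
  constructor <;> linarith

theorem mul (h : WithinErr u k x x') (h' : WithinErr u m y y') (hx : 0 ≤ x) (hy : 0 ≤ y)
    (hu : u ≤ 1) : WithinErr u (k + m) (x * y) (x' * y') := by
  have hx' : 0 ≤ x * (1 - u) ^ k := mul_nonneg hx (pow_nonneg (by linarith) k)
  have hy' : 0 ≤ y * (1 - u) ^ m := mul_nonneg hy (pow_nonneg (by linarith) m)
  constructor
  · calc x * y * (1 - u) ^ (k + m) = x * (1 - u) ^ k * (y * (1 - u) ^ m) := by ring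
      _ ≤ x' * y' := mul_le_mul h.1 h'.1 hy' (hx'.trans h.1)
  · calc x' * y' ≤ x * (1 + u) ^ k * (y * (1 + u) ^ m) :=
          mul_le_mul h.2 h'.2 (hy'.trans h'.1) (hx'.trans (h.1.trans h.2))
      _ = x * y * (1 + u) ^ (k + m) := by ring

theorem mul_one_add (h : WithinErr u k x x') (hx : 0 ≤ x) (hδ : |δ| ≤ u) (hu : u ≤ 1) :
    WithinErr u (k + 1) x (x' * (1 + δ)) := by
  simpa using h.mul (one_add hδ) hx zero_le_one hu

theorem sqrt (h : WithinErr u (2 * k) x x') (hu₀ : 0 ≤ u) (hu : u ≤ 1) :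
    WithinErr u k (√x) (√x') := by
  have hsq (v : ℝ) (hv : 0 ≤ v) : √(x * v ^ (2 * k)) = √x * v ^ k := by
    rw [pow_mul', Real.sqrt_mul' x (sq_nonneg _), Real.sqrt_sq (pow_nonneg hv k)]
  constructor
  · rw [← hsq (1 - u) (by linarith)]
    exact Real.sqrt_le_sqrt h.1
  · rw [← hsq (1 + u) (by linarith)]
    exact Real.sqrt_le_sqrt h.2

theorem abs_div_sub_div_le (h : WithinErr u k x x') (h' : WithinErr u k y y') (hx : 0 ≤ x)
    (hy : 0 ≤ y) (hu₀ : 0 ≤ u) (hu : u < 1) :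
    |x' / y' - x / y| ≤ ((1 + u) ^ k / (1 - u) ^ k - 1) * (x / y) := by
  set l := (1 - u) ^ k
  set L := (1 + u) ^ k
  have hl : 0 < l := pow_pos (by linarith) k
  have hlL : l ≤ L := pow_le_pow_left₀ (by linarith) (by linarith) k
  rcases hy.eq_or_lt with rfl | hy
  · have hy' : y' = 0 := le_antisymm (by simpa using h'.2) (by simpa using h'.1)
    simp [hy']
  have hy' : 0 < y' := lt_of_lt_of_le (mul_pos hy hl) h'.1
  have hxy : 0 ≤ x / y := div_nonneg hx hy.le
  have hupper : x' / y' ≤ L / l * (x / y) := by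
    calc x' / y' ≤ x * L / (y * l) := div_le_div₀ (by positivity) h.2 (by positivity) h'.1
      _ = L / l * (x / y) := by field_simp
  have hlower : l / L * (x / y) ≤ x' / y' := by
    calc l / L * (x / y) = x * l / (y * L) := by field_simp
      _ ≤ x' / y' := div_le_div₀ (h.nonneg hx hu.le) h.1 hy' h'.2
  have hdev : 1 - l / L ≤ L / l - 1 := by
    rw [one_sub_div (by positivity), div_sub_one hl.ne']
    exact div_le_div_of_nonneg_left (by linarith) hl hlL
  have := mul_le_mul_of_nonneg_right hdev hxy
  rw [abs_le]
  constructor <;> linarith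

end WithinErr

theorem one_add_pow_three_div_one_sub_pow_three_sub_one_le {u : ℝ} (hu₀ : 0 ≤ u)
    (hu : 7 * u < 1) : (1 + u) ^ 3 / (1 - u) ^ 3 - 1 ≤ 7 * u / (1 - 7 * u) := by
  have h7 : 0 < 1 - 7 * u := by linarith
  have h1 : 0 < (1 - u) ^ 3 := pow_pos (by linarith) 3
  rw [div_sub_one h1.ne', div_le_div_iff₀ h1 h7]
  nlinarith [pow_nonneg hu₀ 2, pow_nonneg hu₀ 3, pow_nonneg hu₀ 4, pow_nonneg hu₀ 5]

theorem withinErr_sq_norm {u δ δ' δ'' : ℝ} (z : ℂ) (hδ : |δ| ≤ u) (hδ' : |δ'| ≤ u)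
    (hδ'' : |δ''| ≤ u) (hu : u ≤ 1) :
    WithinErr u 2 (‖z‖ ^ 2) ((z.re ^ 2 * (1 + δ) + z.im ^ 2 * (1 + δ')) * (1 + δ'')) := by
  have hz : ‖z‖ ^ 2 = z.re ^ 2 + z.im ^ 2 := by
    rw [Complex.sq_norm, Complex.normSq_apply]; ring
  rw [hz]
  refine WithinErr.mul_one_add (WithinErr.add ?_ ?_) (by positivity) hδ'' hu
  · exact (WithinErr.refl u _).mul_one_add (sq_nonneg _) hδ hu
  · exact (WithinErr.refl u _).mul_one_add (sq_nonneg _) hδ' hu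

theorem mul_mul_div_sqrt_mul_mul {a b p q r : ℝ} (ha : 0 ≤ a) :
    a * p * q / (√(a * b) * r) = √a * p * q / (√b * r) := by
  rw [Real.sqrt_mul ha]
  conv_rhs => rw [← Real.div_sqrt]
  ring

theorem lapack310_clartg_c_error_general (u : ℝ) (hu' : u ≤ 1 / 24) (f g : ℂ)
    (δ₁ δ₁' δ₂ δ₂' δ₃ δ₄ δh δa δb δc δd : ℝ)
    (h₁ : |δ₁| ≤ u) (h₁' : |δ₁'| ≤ u) (h₂ : |δ₂| ≤ u) (h₂' : |δ₂'| ≤ u)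
    (h₃ : |δ₃| ≤ u) (h₄ : |δ₄| ≤ u) (hh : |δh| ≤ u) (hab : |δa| ≤ u) (hbb : |δb| ≤ u)
    (hcc : |δc| ≤ u) (hdd : |δd| ≤ u) :
    let f₂ : ℝ := (f.re ^ 2 * (1 + δ₁) + f.im ^ 2 * (1 + δ₁')) * (1 + δ₃)
    let g₂ : ℝ := (g.re ^ 2 * (1 + δ₂) + g.im ^ 2 * (1 + δ₂')) * (1 + δ₄)
    let h₂ : ℝ := (f₂ + g₂) * (1 + δh)
    let c : ℝ := ‖f‖ / Real.sqrt (‖f‖ ^ 2 + ‖g‖ ^ 2)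
    |f₂ * (1 + δc) * (1 + δd) / (Real.sqrt (f₂ * h₂ * (1 + δa)) * (1 + δb)) - c| ≤
      7 * u / (1 - 7 * u) * c := by
  have hu₀ : 0 ≤ u := (abs_nonneg δ₁).trans h₁
  have hu : u ≤ 1 := by linarith
  have hf₂ := withinErr_sq_norm f h₁ h₁' h₃ hu
  have hg₂ := withinErr_sq_norm g h₂ h₂' h₄ hu
  intro f₂ g₂ h₂ c
  have hh₂ : WithinErr u 3 (‖f‖ ^ 2 + ‖g‖ ^ 2) h₂ :=
    (hf₂.add hg₂).mul_one_add (by positivity) hh hu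
  have hnum : WithinErr u 3 ‖f‖ (√f₂ * (1 + δc) * (1 + δd)) := by
    have hroot : WithinErr u 1 ‖f‖ √f₂ := by
      simpa [Real.sqrt_sq (norm_nonneg f)] using hf₂.sqrt (k := 1) hu₀ hu
    exact (hroot.mul_one_add (norm_nonneg f) hcc hu).mul_one_add (norm_nonneg f) hdd hu
  have hden : WithinErr u 3 √(‖f‖ ^ 2 + ‖g‖ ^ 2) (√(h₂ * (1 + δa)) * (1 + δb)) :=
    ((hh₂.mul_one_add (by positivity) hab hu).sqrt hu₀ hu).mul_one_add
      (Real.sqrt_nonneg _) hbb hu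
  rw [mul_assoc f₂ h₂, mul_mul_div_sqrt_mul_mul (hf₂.nonneg (by positivity) hu)]
  calc _ ≤ ((1 + u) ^ 3 / (1 - u) ^ 3 - 1) * c :=
        hnum.abs_div_sub_div_le hden (norm_nonneg f) (Real.sqrt_nonneg _) hu₀ (by linarith)
    _ ≤ 7 * u / (1 - 7 * u) * c :=
        mul_le_mul_of_nonneg_right
          (one_add_pow_three_div_one_sub_pow_three_sub_one_le hu₀ (by linarith)) (by positivity)

/-- Worst-case error of the cosine in the LAPACK 3.10 complex Givens algorithm: with
`f ≠ 0`, rounding errors bounded by `u ≤ 1/24`, and the computed quantities `f₂, g₂, h₂`,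
the computed `ĉ = f₂·(1 + δ_c)·(1 + δ_d)/(sqrt (f₂·h₂·(1 + δ_a))·(1 + δ_b))` satisfies
`|ĉ - c| ≤ γ_7·c`, where `c = |f|/sqrt (|f|² + |g|²)` and `γ_7 = 7u/(1 - 7u)`. -/
theorem lapack310_clartg_c_error (u : ℝ) (hu : 0 < u) (hu' : u ≤ 1 / 24)
    (f g : ℂ) (hf : f ≠ 0)
    (δ₁ δ₁' δ₂ δ₂' δ₃ δ₄ δh δa δb δc δd : ℝ)
    (h₁ : |δ₁| ≤ u) (h₁' : |δ₁'| ≤ u) (h₂ : |δ₂| ≤ u) (h₂' : |δ₂'| ≤ u)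
    (h₃ : |δ₃| ≤ u) (h₄ : |δ₄| ≤ u) (hh : |δh| ≤ u) (hab : |δa| ≤ u) (hbb : |δb| ≤ u)
    (hcc : |δc| ≤ u) (hdd : |δd| ≤ u) :
    let f₂ : ℝ := (f.re ^ 2 * (1 + δ₁) + f.im ^ 2 * (1 + δ₁')) * (1 + δ₃)
    let g₂ : ℝ := (g.re ^ 2 * (1 + δ₂) + g.im ^ 2 * (1 + δ₂')) * (1 + δ₄)
    let h₂ : ℝ := (f₂ + g₂) * (1 + δh)
    let c : ℝ := ‖f‖ / Real.sqrt (‖f‖ ^ 2 + ‖g‖ ^ 2)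
    |f₂ * (1 + δc) * (1 + δd) / (Real.sqrt (f₂ * h₂ * (1 + δa)) * (1 + δb)) - c| ≤
      7 * u / (1 - 7 * u) * c :=
  lapack310_clartg_c_error_general u hu' f g δ₁ δ₁' δ₂ δ₂' δ₃ δ₄ δh δa δb δc δd h₁ h₁' h₂ h₂' h₃ h₄
    hh hab hbb hcc hdd
end
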